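/- The Borel-Tanner pmf sums to one: for every θ ∈ (0,1) and positive integer r, ∑_{x=r}^{∞} r·x^{x-r-1}/(x-r)! · θ^{x-r} · e^{-θx} = 1. -/

import Mathlib

set_option maxHeartbeats 1000000

noncomputable def btC (r x : ℕ) : ℝ :=
  r * (x : ℝ) ^ ((x : ℤ) - r - 1) / (Nat.factorial (x - r))

noncomputable def btP (r x : ℕ) (θ : ℝ) : ℝ :=
  btC r x * θ ^ (x - r) * Real.exp (-θ * x)

namespace BTaux

open Finset Real Set
open scoped NNReal ENNReal


noncomputable def A (n j : ℕ) (x : ℝ) : ℝ :=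
  ∑ k ∈ range (n+1), (-1:ℝ)^k * (n.choose k) * (x + k)^j

lemma A_step (n j : ℕ) (x : ℝ) : A (n+1) j x = A n j x - A n j (x+1) := by
  have hT : ∑ k ∈ range (n+1), (-1:ℝ)^k * (n.choose (k+1)) * (x + (k+1))^j
      = x^j - A n j x := by
    have h2 : ∑ k ∈ range (n+2), (-1:ℝ)^k * (n.choose k) * (x + k)^j = A n j x := by
      rw [Finset.sum_range_succ]
      simp [A, Nat.choose_succ_self]
    rw [Finset.sum_range_succ'] at h2
    simp only [pow_zero, one_mul, Nat.choose_zero_right, Nat.cast_one, add_zero] at h2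
    push_cast at h2 ⊢
    have : ∀ k ∈ range (n+1), (-1:ℝ)^(k+1) * (n.choose (k+1)) * (x + (k+1))^j
        = -((-1:ℝ)^k * (n.choose (k+1)) * (x + (k+1))^j) := by
      intro k _; push_cast; ring
    rw [Finset.sum_congr rfl this, Finset.sum_neg_distrib] at h2
    push_cast at h2
    simp only [add_zero] at h2
    linarith [h2]
  have hA1 : A (n+1) j x
      = ∑ k ∈ range (n+1), (-1:ℝ)^(k+1) * ((n+1).choose (k+1)) * (x + (k+1))^j
        + x^j := by
    rw [A, Finset.sum_range_succ']
    norm_num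
  have hsplit : ∀ k ∈ range (n+1), (-1:ℝ)^(k+1) * ((n+1).choose (k+1)) * (x + (k+1))^j
      = -((-1:ℝ)^k * (n.choose k) * ((x+1) + k)^j)
        + (-((-1:ℝ)^k * (n.choose (k+1)) * (x + (k+1))^j)) := by
    intro k _
    rw [Nat.choose_succ_succ]
    push_cast
    ring
  rw [hA1, Finset.sum_congr rfl hsplit, Finset.sum_add_distrib,
    Finset.sum_neg_distrib, Finset.sum_neg_distrib, hT]
  have : A n j (x+1) = ∑ k ∈ range (n+1), (-1:ℝ)^k * (n.choose k) * ((x+1) + k)^j := rfl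
  rw [this]
  ring

lemma A_zero_eq (n j : ℕ) : A n j 0 = ∑ k ∈ range (n+1), (-1:ℝ)^k * (n.choose k) * (k:ℝ)^j := by
  simp [A]

lemma A_eq_zero : ∀ n, ∀ j < n, ∀ x : ℝ, A n j x = 0 := by
  intro n
  induction n with
  | zero => intro j hj; omega
  | succ n ih =>
    intro j hj x
    rw [A_step]
    rcases lt_or_eq_of_le (Nat.lt_succ_iff.mp hj) with h | h
    · rw [ih j h x, ih j h (x+1), sub_zero]
    · subst h
      have e1 : ∀ y : ℝ, A j j y = ∑ k ∈ range (j+1), ∑ m ∈ range (j+1),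
          (-1:ℝ)^k * (j.choose k) * (y^m * (k:ℝ)^(j-m) * (j.choose m)) := by
        intro y
        refine Finset.sum_congr rfl fun k _ => ?_
        rw [add_pow, Finset.mul_sum]
      rw [e1 x, e1 (x+1), ← Finset.sum_sub_distrib]
      have e2 : ∀ k ∈ range (j+1), (∑ m ∈ range (j+1),
            (-1:ℝ)^k * (j.choose k) * (x^m * (k:ℝ)^(j-m) * (j.choose m)))
          - (∑ m ∈ range (j+1),
            (-1:ℝ)^k * (j.choose k) * ((x+1)^m * (k:ℝ)^(j-m) * (j.choose m)))
          = ∑ m ∈ range (j+1),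
            ((x^m - (x+1)^m) * (j.choose m)) * ((-1:ℝ)^k * (j.choose k) * (k:ℝ)^(j-m)) := by
        intro k _
        rw [← Finset.sum_sub_distrib]
        exact Finset.sum_congr rfl fun m _ => by ring
      rw [Finset.sum_congr rfl e2, Finset.sum_comm]
      refine Finset.sum_eq_zero fun m hm => ?_
      rw [← Finset.mul_sum]
      rcases Nat.eq_zero_or_pos m with hm0 | hm0
      · subst hm0; simp
      · have : ∑ k ∈ range (j+1), (-1:ℝ)^k * (j.choose k) * (k:ℝ)^(j-m) = 0 := by
          rw [← A_zero_eq]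
          exact ih (j-m) (by have := Finset.mem_range.mp hm; omega) 0
        rw [this, mul_zero]



lemma fact_le_pow_mul (k : ℕ) : ∀ r : ℕ, (k + r).factorial ≤ (k + r)^r * k.factorial := by
  intro r
  induction r with
  | zero => simp
  | succ r ih =>
    have h1 : (k + (r+1)).factorial = (k + r + 1) * (k + r).factorial := by
      rw [← Nat.add_assoc, Nat.factorial_succ]
    rw [h1]
    calc (k + r + 1) * (k + r).factorial ≤ (k + r + 1) * ((k + r)^r * k.factorial) :=
          Nat.mul_le_mul_left _ ih
      _ ≤ (k + r + 1) * ((k + r + 1)^r * k.factorial) := by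
          exact Nat.mul_le_mul_left _ (Nat.mul_le_mul_right _ (Nat.pow_le_pow_left (by omega) r))
      _ = (k + (r+1))^(r+1) * k.factorial := by ring_nf
  
lemma pow_le_exp_mul_factorial {x : ℝ} (hx : 0 ≤ x) (n : ℕ) :
    x ^ n ≤ Real.exp x * n.factorial := by
  have hexp : Real.exp x = ∑' m : ℕ, x ^ m / m.factorial := by
    rw [Real.exp_eq_exp_ℝ, NormedSpace.exp_eq_tsum_div]
  have hs : Summable fun m : ℕ => x ^ m / m.factorial := Real.summable_pow_div_factorial x
  have h1 : x ^ n / n.factorial ≤ Real.exp x := by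
    rw [hexp]
    exact hs.le_tsum n fun j _ => by positivity
  calc x ^ n = (x ^ n / n.factorial) * n.factorial := by
        field_simp
    _ ≤ Real.exp x * n.factorial := by
        apply mul_le_mul_of_nonneg_right h1 (by positivity)

noncomputable def bc (r k : ℕ) : ℝ :=
  r * ((r + k : ℕ) : ℝ) ^ ((k : ℤ) - 1) / (Nat.factorial k)

lemma bc_nonneg (r k : ℕ) : 0 ≤ bc r k := by
  unfold bc
  positivity

lemma bc_le (r : ℕ) (hr : 1 ≤ r) (k : ℕ) : bc r k ≤ r * Real.exp r * (Real.exp 1)^k := by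
  set n : ℕ := r + k with hn
  have hn1 : 1 ≤ n := le_add_right hr
  have hnpos : (0:ℝ) < (n:ℝ) := by exact_mod_cast hn1
  have hz : ((n:ℝ)) ^ ((k : ℤ) - 1) = (n:ℝ)^(n:ℕ) / (n:ℝ)^(r+1 : ℕ) := by
    rw [← zpow_natCast ((n:ℝ)) n, ← zpow_natCast ((n:ℝ)) (r+1), ← zpow_sub₀ (ne_of_gt hnpos)]
    congr 1
    push_cast [hn]
    ring
  have h2 : (n:ℝ)^(n:ℕ) ≤ Real.exp n * (n.factorial : ℝ) :=
    pow_le_exp_mul_factorial hnpos.le n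
  have h3 : ((n.factorial : ℕ) : ℝ) ≤ (n:ℝ)^r * (k.factorial : ℝ) := by
    have := fact_le_pow_mul k r
    rw [Nat.add_comm k r] at this
    exact_mod_cast this
  have key : (n:ℝ) ^ ((k:ℤ) - 1) ≤ Real.exp n * (k.factorial : ℝ) := by
    rw [hz, div_le_iff₀ (by positivity)]
    have hone : (1:ℝ) ≤ (n:ℝ) := by exact_mod_cast hn1
    calc (n:ℝ)^(n:ℕ) ≤ Real.exp n * (n.factorial : ℝ) := h2
      _ ≤ Real.exp n * ((n:ℝ)^r * (k.factorial : ℝ)) := by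
          apply mul_le_mul_of_nonneg_left h3 (Real.exp_pos _).le
      _ = (Real.exp n * (k.factorial : ℝ)) * (n:ℝ)^r := by ring
      _ ≤ (Real.exp n * (k.factorial : ℝ)) * (n:ℝ)^r * (n:ℝ) := by
          apply le_mul_of_one_le_right (by positivity) hone
      _ = Real.exp n * (k.factorial : ℝ) * (n:ℝ)^(r+1) := by ring
  have hkf : (0:ℝ) < (k.factorial : ℝ) := by exact_mod_cast k.factorial_pos
  have h4 : bc r k ≤ (r:ℝ) * Real.exp n := by
    unfold bc
    rw [div_le_iff₀ hkf]
    calc (r:ℝ) * ((r + k : ℕ) : ℝ) ^ ((k:ℤ) - 1) ≤ (r:ℝ) * (Real.exp n * (k.factorial : ℝ)) := by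
          apply mul_le_mul_of_nonneg_left _ (by positivity)
          exact_mod_cast key
      _ = (r:ℝ) * Real.exp n * (k.factorial : ℝ) := by ring
  calc bc r k ≤ (r:ℝ) * Real.exp n := h4
    _ = (r:ℝ) * Real.exp r * (Real.exp 1)^k := by
        rw [hn]
        push_cast
        rw [Real.exp_add]
        have : Real.exp (k:ℝ) = (Real.exp 1)^k := by
          rw [← Real.exp_nat_mul, mul_one]
        rw [this, mul_assoc]

lemma summable_bc_mul_pow (r : ℕ) (hr : 1 ≤ r) {ρ : ℝ} (h0 : 0 ≤ ρ)
    (h1 : ρ * Real.exp 1 < 1) : Summable (fun k => bc r k * ρ^k) := by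
  refine Summable.of_nonneg_of_le
    (fun k => mul_nonneg (bc_nonneg r k) (pow_nonneg h0 _))
    (fun k => ?_) ((summable_geometric_of_lt_one (by positivity) h1).mul_left ((r:ℝ) * Real.exp r))
  calc bc r k * ρ^k ≤ ((r:ℝ) * Real.exp r * (Real.exp 1)^k) * ρ^k := by
        apply mul_le_mul_of_nonneg_right (bc_le r hr k) (pow_nonneg h0 _)
    _ = (r:ℝ) * Real.exp r * (ρ * Real.exp 1)^k := by
        rw [mul_pow]; ring

lemma exp_tsum (x : ℝ) : ∑' m : ℕ, x ^ m / (m.factorial : ℝ) = Real.exp x := by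
  rw [Real.exp_eq_exp_ℝ, NormedSpace.exp_eq_tsum_div]

lemma theta_bound {θ : ℝ} (h0 : 0 < θ) (h1 : θ < 1/8) :
    θ * Real.exp θ * Real.exp 1 < 1 := by
  have he : Real.exp 1 < 2.7182818286 := Real.exp_one_lt_d9
  have h2 : Real.exp θ < Real.exp 1 := Real.exp_lt_exp.mpr (by linarith)
  have h4 : (0:ℝ) < Real.exp 1 := Real.exp_pos 1
  have hp : (0:ℝ) < Real.exp θ := Real.exp_pos θ
  have s1 : θ * Real.exp θ < (1/8) * 2.7182818286 := by nlinarith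
  have s2 : θ * Real.exp θ * Real.exp 1 < ((1/8) * 2.7182818286) * 2.7182818286 := by nlinarith
  nlinarith

lemma S_eq_one_small (r : ℕ) (hr : 1 ≤ r) {θ : ℝ} (h0 : 0 < θ) (h1 : θ < 1/8) :
    ∑' k : ℕ, bc r k * θ^k * Real.exp (-θ * ((r + k : ℕ) : ℝ)) = 1 := by
  have hρ0 : (0:ℝ) ≤ θ * Real.exp θ := by positivity
  have hρ1 : (θ * Real.exp θ) * Real.exp 1 < 1 := theta_bound h0 h1
  set a : ℕ × ℕ → ℝ :=
    fun p => (bc r p.1 * θ^p.1) * ((-θ * ((r + p.1 : ℕ) : ℝ))^p.2 / (p.2.factorial : ℝ))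
    with ha
  have habs_eq : ∀ k m : ℕ, |a (k, m)| =
      (bc r k * θ^k) * ((θ * ((r + k : ℕ) : ℝ))^m / (m.factorial : ℝ)) := by
    intro k m
    have hN : (0:ℝ) ≤ ((r + k : ℕ) : ℝ) := Nat.cast_nonneg _
    simp only [ha, abs_mul, abs_div, abs_pow, Nat.abs_cast, abs_neg]
    rw [abs_of_nonneg (bc_nonneg r k), abs_of_nonneg h0.le]
  have hrow_abs : ∀ k : ℕ, Summable (fun m => |a (k, m)|) := fun k =>
    (((Real.summable_pow_div_factorial (θ * ((r + k:ℕ):ℝ))).mul_left (bc r k * θ^k)).congr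
      (fun m => (habs_eq k m).symm))
  have hcol : Summable (fun k => ∑' m, |a (k, m)|) := by
    have hev : ∀ k, ∑' m, |a (k,m)| = Real.exp (θ * r) * (bc r k * (θ * Real.exp θ)^k) := by
      intro k
      calc ∑' m, |a (k,m)|
          = ∑' m, (bc r k * θ^k) * ((θ * ((r + k:ℕ):ℝ))^m / (m.factorial:ℝ)) :=
            tsum_congr (fun m => habs_eq k m)
        _ = (bc r k * θ^k) * Real.exp (θ * ((r + k:ℕ):ℝ)) := by rw [tsum_mul_left, exp_tsum]
        _ = Real.exp (θ * r) * (bc r k * (θ * Real.exp θ)^k) := by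
            push_cast
            rw [mul_add, Real.exp_add, mul_pow,
              show θ * (k:ℝ) = (k:ℕ) * θ by ring, Real.exp_nat_mul]
            ring
    exact (((summable_bc_mul_pow r hr hρ0 hρ1).mul_left (Real.exp (θ * r))).congr
      (fun k => (hev k).symm))
  have habs : Summable (fun p : ℕ×ℕ => |a p|) :=
    (summable_prod_of_nonneg (fun p => abs_nonneg _)).mpr ⟨hrow_abs, hcol⟩
  have hsum : Summable a := summable_abs_iff.mp habs
  have hrows : ∀ k, Summable (fun m => a (k,m)) := fun k => summable_abs_iff.mp (hrow_abs k)
  have hS1 : (∑' k : ℕ, bc r k * θ^k * Real.exp (-θ * ((r+k:ℕ):ℝ))) = ∑' p : ℕ×ℕ, a p := by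
    rw [Summable.tsum_prod' hsum hrows]
    refine tsum_congr fun k => ?_
    calc bc r k * θ^k * Real.exp (-θ * ((r+k:ℕ):ℝ))
        = (bc r k * θ^k) * ∑' m, ((-θ * ((r+k:ℕ):ℝ))^m / (m.factorial:ℝ)) := by
          rw [exp_tsum]
      _ = ∑' m, a (k, m) := by rw [← tsum_mul_left]
  have hS2 : ∑' p : ℕ×ℕ, a p = ∑' n : ℕ, ∑ kl ∈ antidiagonal n, a kl := by
    have hsig : Summable (fun x : Σ n : ℕ, {p // p ∈ Finset.HasAntidiagonal.antidiagonal n} =>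
        a (Finset.HasAntidiagonal.sigmaAntidiagonalEquivProd x)) :=
      Finset.HasAntidiagonal.sigmaAntidiagonalEquivProd.summable_iff.mpr hsum
    rw [← Finset.HasAntidiagonal.sigmaAntidiagonalEquivProd.tsum_eq a,
      hsig.tsum_sigma' (fun n => (hasSum_fintype _).summable)]
    exact tsum_congr fun n => by
      rw [← Finset.sum_finset_coe]
      exact tsum_fintype _
  have hD0 : ∑ kl ∈ antidiagonal (0:ℕ), a kl = 1 := by
    rw [Finset.Nat.antidiagonal_zero]
    rw [Finset.sum_singleton]
    have hrne : ((r:ℕ):ℝ) ≠ 0 := by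
      exact_mod_cast Nat.pos_iff_ne_zero.mp hr
    simp only [ha, bc]
    norm_num
    exact mul_inv_cancel₀ hrne
  have hDn : ∀ n:ℕ, 1 ≤ n → ∑ kl ∈ antidiagonal n, a kl = 0 := by
    intro n hn
    rw [Finset.Nat.sum_antidiagonal_eq_sum_range_succ_mk]
    set N : ℕ → ℝ := fun k => ((r + k : ℕ) : ℝ) with hNdef
    have hterm : ∀ k ∈ range (n+1), a (k, n-k) =
        ((r:ℝ) * θ^n / (n.factorial:ℝ) * (-1:ℝ)^n) *
          ((-1:ℝ)^k * (n.choose k : ℕ) * ((r:ℝ) + (k:ℝ))^(n-1)) := by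
      intro k hk
      have hkn : k ≤ n := Nat.lt_succ_iff.mp (Finset.mem_range.mp hk)
      have hNpos : (0:ℝ) < N k := by
        have hrk : 0 < r + k := by omega
        simp only [hNdef]
        exact_mod_cast hrk
      have hNpow : N k ^ ((k:ℤ)-1) * N k ^ ((n-k : ℕ)) = N k ^ ((n-1 : ℕ)) := by
        rw [← zpow_natCast (N k) (n-k), ← zpow_add₀ hNpos.ne', ← zpow_natCast (N k) (n-1)]
        congr 1
        have h1 : ((n-k : ℕ) : ℤ) = (n:ℤ) - k := by
          push_cast [hkn]; ring
        have h2 : ((n-1 : ℕ) : ℤ) = (n:ℤ) - 1 := by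
          push_cast [hn]; ring
        rw [h1, h2]; ring
      have hθpow : θ^k * θ^(n-k) = θ^n := by
        rw [← pow_add, Nat.add_sub_cancel' hkn]
      have hsign : (-1:ℝ)^(n-k) = (-1:ℝ)^n * (-1:ℝ)^k := by
        have h1 : (-1:ℝ)^(n-k) * (-1:ℝ)^k = (-1:ℝ)^n := by
          rw [← pow_add, Nat.sub_add_cancel hkn]
        have h2 : (-1:ℝ)^k * (-1:ℝ)^k = 1 := by
          rw [← pow_add, ← two_mul, pow_mul]; norm_num
        calc (-1:ℝ)^(n-k) = (-1:ℝ)^(n-k) * ((-1:ℝ)^k * (-1:ℝ)^k) := by rw [h2, mul_one]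
          _ = ((-1:ℝ)^(n-k) * (-1:ℝ)^k) * (-1:ℝ)^k := by ring
          _ = (-1:ℝ)^n * (-1:ℝ)^k := by rw [h1]
      have hfact : ((n.choose k : ℕ):ℝ) * (k.factorial:ℝ) * ((n-k).factorial:ℝ)
          = (n.factorial:ℝ) := by
        exact_mod_cast Nat.choose_mul_factorial_mul_factorial hkn
      have hNr : (r:ℝ) + (k:ℝ) = N k := by rw [hNdef]; push_cast; ring
      have hkf : ((k.factorial:ℕ):ℝ) ≠ 0 := by positivity
      have hnkf : (((n-k).factorial:ℕ):ℝ) ≠ 0 := by positivity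
      have hnf : ((n.factorial:ℕ):ℝ) ≠ 0 := by positivity
      calc a (k, n-k)
          = ((r:ℝ) / (k.factorial:ℝ)) * (N k ^ ((k:ℤ)-1) * N k ^ ((n-k:ℕ)))
            * (θ^k * θ^(n-k)) * (-1:ℝ)^(n-k) / ((n-k).factorial:ℝ) := by
            simp only [ha, bc, hNdef]
            rw [neg_mul, neg_pow, mul_pow]
            ring
        _ = ((r:ℝ) / (k.factorial:ℝ)) * N k ^ ((n-1:ℕ)) * θ^n
            * ((-1:ℝ)^n * (-1:ℝ)^k) / ((n-k).factorial:ℝ) := by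
            rw [hNpow, hθpow, hsign]
        _ = ((r:ℝ) * θ^n / (n.factorial:ℝ) * (-1:ℝ)^n) *
            ((-1:ℝ)^k * (n.choose k : ℕ) * ((r:ℝ) + (k:ℝ))^(n-1)) := by
            rw [hNr]
            field_simp
            linear_combination (-1:ℝ) * hfact
    rw [Finset.sum_congr rfl hterm, ← Finset.mul_sum]
    have hA := A_eq_zero n (n-1) (by omega) ((r:ℕ):ℝ)
    rw [A] at hA
    rw [hA, mul_zero]
  rw [hS1, hS2, tsum_eq_single 0 (fun b hb => hDn b (Nat.pos_iff_ne_zero.mpr hb))]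
  exact hD0

lemma analyticAt_fsum (r : ℕ) (hr : 1 ≤ r) {u₀ : ℝ} (h : |u₀| * Real.exp 1 < 1) :
    AnalyticAt ℝ (fun u : ℝ => ∑' k : ℕ, bc r k * u^k) u₀ := by
  have hE : (0:ℝ) < Real.exp 1 := Real.exp_pos 1
  set t : ℝ := |u₀| with ht
  have ht0 : 0 ≤ t := abs_nonneg _
  set ρ : ℝ := (t + (Real.exp 1)⁻¹)/2 with hρ
  have htinv : t < (Real.exp 1)⁻¹ := by
    rw [← one_div, lt_div_iff₀ hE]; linarith
  have htρ : t < ρ := by rw [hρ]; linarith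
  have hρe : ρ * Real.exp 1 < 1 := by
    have h3 : (Real.exp 1)⁻¹ * Real.exp 1 = 1 := inv_mul_cancel₀ hE.ne'
    rw [hρ]; nlinarith
  have hρ0 : 0 ≤ ρ := le_trans ht0 htρ.le
  have hsummable : Summable (fun n => ‖FormalMultilinearSeries.ofScalars ℝ (bc r) n‖
      * ((ρ.toNNReal : ℝ))^n) := by
    have he : ∀ n, ‖FormalMultilinearSeries.ofScalars ℝ (bc r) n‖ * ((ρ.toNNReal : ℝ))^n
        = bc r n * ρ^n := by
      intro n
      rw [FormalMultilinearSeries.ofScalars_norm, Real.norm_eq_abs,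
        abs_of_nonneg (bc_nonneg r n), Real.coe_toNNReal _ hρ0]
    rw [funext he]
    exact summable_bc_mul_pow r hr hρ0 hρe
  have hrad : ((ρ.toNNReal : ℝ≥0) : ℝ≥0∞) ≤ (FormalMultilinearSeries.ofScalars ℝ (bc r)).radius :=
    (FormalMultilinearSeries.ofScalars ℝ (bc r)).le_radius_of_summable_norm hsummable
  have hradpos : 0 < (FormalMultilinearSeries.ofScalars ℝ (bc r)).radius := by
    refine lt_of_lt_of_le ?_ hrad
    have hρpos : (0:ℝ) < ρ := lt_of_le_of_lt ht0 htρ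
    rw [show ((0:ℝ≥0∞)) = ((0 : ℝ≥0) : ℝ≥0∞) by simp]
    rw [ENNReal.coe_lt_coe]
    exact_mod_cast Real.toNNReal_pos.mpr hρpos
  have hball := (FormalMultilinearSeries.ofScalars ℝ (bc r)).hasFPowerSeriesOnBall hradpos
  have hmem : u₀ ∈ Metric.eball (0:ℝ) (FormalMultilinearSeries.ofScalars ℝ (bc r)).radius := by
    rw [Metric.mem_eball, edist_zero_right]
    refine lt_of_lt_of_le ?_ hrad
    rw [enorm_eq_nnnorm, ENNReal.coe_lt_coe]
    rw [← NNReal.coe_lt_coe]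
    simpa [coe_nnnorm, Real.norm_eq_abs, Real.coe_toNNReal _ hρ0] using htρ
  have hAA := hball.analyticAt_of_mem hmem
  have hfun : (FormalMultilinearSeries.ofScalars ℝ (bc r)).sum
      = fun u : ℝ => ∑' k : ℕ, bc r k * u^k := by
    funext x
    rw [show (FormalMultilinearSeries.ofScalars ℝ (bc r)).sum x
      = FormalMultilinearSeries.ofScalarsSum (bc r) x from rfl,
      FormalMultilinearSeries.ofScalars_sum_eq]
    simp [smul_eq_mul]
  rw [← hfun]
  exact hAA



noncomputable def g (r : ℕ) : ℝ → ℝ :=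
  fun θ => Real.exp (-(r:ℝ) * θ) * ∑' k : ℕ, bc r k * (θ * Real.exp (-θ))^k

lemma inner_bound {θ : ℝ} (h0 : 0 < θ) (h1 : θ < 1) :
    |θ * Real.exp (-θ)| * Real.exp 1 < 1 := by
  have h2 : θ - 1 ≠ 0 := sub_ne_zero.mpr (ne_of_lt h1)
  have h3 : θ < Real.exp (θ - 1) := by
    have := Real.add_one_lt_exp h2
    linarith
  have h4 : (0:ℝ) < Real.exp (-θ) * Real.exp 1 := by positivity
  have h5 : Real.exp (θ-1) * (Real.exp (-θ) * Real.exp 1) = 1 := by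
    rw [← Real.exp_add, ← Real.exp_add]
    norm_num
  rw [abs_of_nonneg (by positivity)]
  calc θ * Real.exp (-θ) * Real.exp 1 < Real.exp (θ-1) * (Real.exp (-θ) * Real.exp 1) := by
        rw [mul_assoc]
        exact mul_lt_mul_of_pos_right h3 h4
    _ = 1 := h5

lemma g_analytic (r : ℕ) (hr : 1 ≤ r) : AnalyticOnNhd ℝ (g r) (Set.Ioo (0:ℝ) 1) := by
  intro θ₀ hθ₀
  obtain ⟨h0, h1⟩ := hθ₀
  have hinner : AnalyticAt ℝ (fun θ : ℝ => θ * Real.exp (-θ)) θ₀ := by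
    exact (analyticAt_id).mul (analyticAt_rexp.comp (analyticAt_id.neg))
  have houter : AnalyticAt ℝ (fun u : ℝ => ∑' k : ℕ, bc r k * u^k) (θ₀ * Real.exp (-θ₀)) :=
    analyticAt_fsum r hr (inner_bound h0 h1)
  have hexp : AnalyticAt ℝ (fun θ : ℝ => Real.exp (-(r:ℝ) * θ)) θ₀ :=
    analyticAt_rexp.comp ((analyticAt_const).mul analyticAt_id)
  have hcomp : AnalyticAt ℝ ((fun u : ℝ => ∑' k : ℕ, bc r k * u^k) ∘
      (fun θ : ℝ => θ * Real.exp (-θ))) θ₀ := AnalyticAt.comp (x := θ₀) houter hinner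
  exact hexp.mul hcomp

lemma S_eq_g (r : ℕ) (θ : ℝ) :
    ∑' k : ℕ, bc r k * θ^k * Real.exp (-θ * ((r + k : ℕ) : ℝ)) = g r θ := by
  rw [g, ← tsum_mul_left]
  refine tsum_congr fun k => ?_
  rw [mul_pow]
  have h1 : Real.exp (-θ * ((r + k : ℕ) : ℝ))
      = Real.exp (-(r:ℝ) * θ) * (Real.exp (-θ))^k := by
    push_cast
    rw [← Real.exp_nat_mul, ← Real.exp_add]
    congr 1
    ring
  rw [h1]
  ring

lemma g_eq_one (r : ℕ) (hr : 1 ≤ r) {θ : ℝ} (h0 : 0 < θ) (h1 : θ < 1) : g r θ = 1 := by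
  have heq : Set.EqOn (g r) (fun _ => (1:ℝ)) (Set.Ioo (0:ℝ) 1) := by
    apply AnalyticOnNhd.eqOn_of_preconnected_of_eventuallyEq (g_analytic r hr)
      (analyticOnNhd_const) (isPreconnected_Ioo) (show (1/16 : ℝ) ∈ Set.Ioo (0:ℝ) 1 by norm_num)
    have hnhds : Set.Ioo (0:ℝ) (1/8) ∈ nhds (1/16 : ℝ) :=
      isOpen_Ioo.mem_nhds (by norm_num)
    filter_upwards [hnhds] with x hx
    rw [← S_eq_g, S_eq_one_small r hr hx.1 hx.2]
  exact heq ⟨h0, h1⟩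


theorem main (r : ℕ) (hr : 1 ≤ r) (θ : ℝ) (h0 : 0 < θ) (h1 : θ < 1) :
    ∑' k : ℕ, btP r (r + k) θ = 1 := by
  have hterm : ∀ k : ℕ, btP r (r + k) θ
      = bc r k * θ^k * Real.exp (-θ * ((r + k : ℕ) : ℝ)) := by
    intro k
    unfold btP btC bc
    have h2 : r + k - r = k := by omega
    rw [h2]
    have h3 : ((r + k : ℕ) : ℤ) - (r:ℤ) - 1 = (k : ℤ) - 1 := by push_cast; ring
    rw [h3]
  rw [tsum_congr hterm, S_eq_g, g_eq_one r hr h0 h1]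

end BTaux

/-- The Borel–Tanner pmf sums to one:
`∑_{x=r}^∞ r·x^(x-r-1)/(x-r)! · θ^(x-r) e^(-θx) = 1`. -/
theorem bt_sums_to_one (r : ℕ) (hr : 1 ≤ r) (θ : ℝ) (h0 : 0 < θ) (h1 : θ < 1) :
    ∑' k : ℕ, btP r (r + k) θ = 1 := BTaux.main r hr θ h0 h1
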